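/- arXiv:1311.3013 — 2 statements merged into one kernel-verified Lean document; each statement's English description precedes it below -/
import Mathlib

section
/- Suppose φ and ψ are L_EA-formulas and ⁺ is a stratifier. Let α, β < ω·ω be such that (Kφ)⁺ ≡ K^α φ⁺ and (Kψ)⁺ ≡ K^β ψ⁺. Then depth(φ) < depth(ψ) if and only if α < β. -/
namespace FCT

/-- Terms of the language `L_PA = (0, S, +, ·)`.  Variables are indexed by `ℕ`. -/
inductive Term : Type where
  | var : ℕ → Term
  | zero : Term
  | succ : Term → Term
  | add : Term → Term → Term
  | mul : Term → Term → Term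

/-- Formulas of `L_PA` extended by a family of unary operators indexed by `Op`
(the base logic).  `op K φ` is the formula `Kφ`. -/
inductive Formula (Op : Type) : Type where
  | eq : Term → Term → Formula Op
  | imp : Formula Op → Formula Op → Formula Op
  | not : Formula Op → Formula Op
  | all : ℕ → Formula Op → Formula Op
  | op : Op → Formula Op → Formula Op

/-- The ordinals below `ω·ω`, encoded as pairs: `(a, b)` represents `ω·a + b`,
with the lexicographic order. -/
abbrev Ord2 : Type := ℕ ×ₗ ℕ

/-- The ordinal `ω·a + b` as an element of `Ord2`. -/
def omul (a b : ℕ) : Ord2 := toLex (a, b)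

/-- Formulas of `L_EA`: one operator `K`. -/
abbrev LEA : Type := Formula Unit

/-- Formulas of `L_{ω·ω}`: operators `K^α` for `α < ω·ω`. -/
abbrev LOO : Type := Formula Ord2

/-- `Kφ` in `L_EA`. -/
def KK (φ : LEA) : LEA := .op () φ

/-- Variables occurring in a term. -/
def Term.vars : Term → Set ℕ
  | .var x => {x}
  | .zero => ∅
  | .succ t => t.vars
  | .add t u => t.vars ∪ u.vars
  | .mul t u => t.vars ∪ u.vars

/-- Free variables of a formula (`FV(Kφ) = FV(φ)`). -/
def Formula.free {Op : Type} : Formula Op → Set ℕ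
  | .eq t u => t.vars ∪ u.vars
  | .imp φ ψ => φ.free ∪ ψ.free
  | .not φ => φ.free
  | .all x φ => φ.free \ {x}
  | .op _ φ => φ.free

/-- A sentence is a formula with no free variables. -/
def Formula.IsSentence {Op : Type} (φ : Formula Op) : Prop := φ.free = ∅

/-- A theory is a set of sentences. -/
def IsTheory {Op : Type} (T : Set (Formula Op)) : Prop := ∀ φ ∈ T, φ.IsSentence

/-- Substitution of the term `u` for the variable `x` in a term. -/
def Term.subst (x : ℕ) (u : Term) : Term → Term
  | .var y => if y = x then u else .var y
  | .zero => .zero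
  | .succ t => .succ (Term.subst x u t)
  | .add t₁ t₂ => .add (Term.subst x u t₁) (Term.subst x u t₂)
  | .mul t₁ t₂ => .mul (Term.subst x u t₁) (Term.subst x u t₂)

/-- Substitution `φ(x|u)` of the term `u` for all free occurrences of `x` in `φ`. -/
def Formula.subst {Op : Type} (x : ℕ) (u : Term) : Formula Op → Formula Op
  | .eq t₁ t₂ => .eq (Term.subst x u t₁) (Term.subst x u t₂)
  | .imp φ ψ => .imp (Formula.subst x u φ) (Formula.subst x u ψ)
  | .not φ => .not (Formula.subst x u φ)
  | .all y φ => if y = x then .all y φ else .all y (Formula.subst x u φ)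
  | .op K φ => .op K (Formula.subst x u φ)

/-- The term `u` is substitutable for the variable `x` in the formula. -/
def Formula.Substitutable {Op : Type} (x : ℕ) (u : Term) : Formula Op → Prop
  | .eq _ _ => True
  | .imp φ ψ => φ.Substitutable x u ∧ ψ.Substitutable x u
  | .not φ => φ.Substitutable x u
  | .all y φ => x = y ∨ x ∉ φ.free ∨ (y ∉ u.vars ∧ φ.Substitutable x u)
  | .op _ φ => φ.Substitutable x u

/-- Matching of two variables relative to a list of pairs of renamed bound variables. -/
def varMatch : List (ℕ × ℕ) → ℕ → ℕ → Prop
  | [], x, y => x = y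
  | (a, b) :: ρ, x, y => (x = a ∧ y = b) ∨ (x ≠ a ∧ y ≠ b ∧ varMatch ρ x y)

/-- Alphabetic matching of terms relative to a list of pairs of renamed bound variables. -/
def Term.alpha (ρ : List (ℕ × ℕ)) : Term → Term → Prop
  | .var x, .var y => varMatch ρ x y
  | .zero, .zero => True
  | .succ t, .succ u => t.alpha ρ u
  | .add t₁ t₂, .add u₁ u₂ => t₁.alpha ρ u₁ ∧ t₂.alpha ρ u₂
  | .mul t₁ t₂, .mul u₁ u₂ => t₁.alpha ρ u₁ ∧ t₂.alpha ρ u₂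
  | _, _ => False

/-- Alphabetic matching of formulas relative to a list of pairs of renamed bound variables. -/
def Formula.alpha {Op : Type} (ρ : List (ℕ × ℕ)) : Formula Op → Formula Op → Prop
  | .eq t₁ t₂, .eq u₁ u₂ => t₁.alpha ρ u₁ ∧ t₂.alpha ρ u₂
  | .imp φ₁ φ₂, .imp ψ₁ ψ₂ => φ₁.alpha ρ ψ₁ ∧ φ₂.alpha ρ ψ₂
  | .not φ, .not ψ => φ.alpha ρ ψ
  | .all x φ, .all y ψ => φ.alpha ((x, y) :: ρ) ψ
  | .op K φ, .op K' ψ => K = K' ∧ φ.alpha ρ ψ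
  | _, _ => False

/-- `ψ` is an alphabetic variant of `φ`: it is obtained from `φ` by renaming
bound variables while respecting the binding of the quantifiers. -/
def Formula.AlphaVariant {Op : Type} (φ ψ : Formula Op) : Prop := φ.alpha [] ψ

/-- The data of a structure for the base logic over `L_PA` extended by the
operators `Op`: a first-order part together with a truth valuation
`opSat K φ s` ("`M ⊨ Kφ[s]`") for operator-prefixed formulas. -/
structure PreStruc (Op : Type) : Type 1 where
  U : Type
  zero : U
  succ : U → U
  add : U → U → U
  mul : U → U → U
  opSat : Op → Formula Op → (ℕ → U) → Prop

/-- Evaluation of terms. -/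
def Term.eval {Op : Type} (M : PreStruc Op) (s : ℕ → M.U) : Term → M.U
  | .var x => s x
  | .zero => M.zero
  | .succ t => M.succ (t.eval M s)
  | .add t u => M.add (t.eval M s) (u.eval M s)
  | .mul t u => M.mul (t.eval M s) (u.eval M s)

/-- Satisfaction `M ⊨ φ[s]`: as in first-order logic on non-operator formulas,
and given by `opSat` on operator-prefixed formulas. -/
def Sat {Op : Type} (M : PreStruc Op) : Formula Op → (ℕ → M.U) → Prop
  | .eq t u, s => t.eval M s = u.eval M s
  | .imp φ ψ, s => Sat M φ s → Sat M ψ s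
  | .not φ, s => ¬ Sat M φ s
  | .all x φ, s => ∀ a : M.U, Sat M φ (Function.update s x a)
  | .op K φ, s => M.opSat K φ s

/-- `M` is a genuine structure of the base logic: its operator valuation
(1) depends only on the values of the assignment on the free variables,
(2) is invariant under renaming of bound variables, and
(3) satisfies weak substitution. -/
def IsStruc {Op : Type} (M : PreStruc Op) : Prop :=
  (∀ (K : Op) (φ : Formula Op) (s t : ℕ → M.U),
      (∀ x ∈ φ.free, s x = t x) → (M.opSat K φ s ↔ M.opSat K φ t)) ∧
  (∀ (K : Op) (φ ψ : Formula Op) (s : ℕ → M.U),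
      φ.AlphaVariant ψ → (M.opSat K φ s ↔ M.opSat K ψ s)) ∧
  (∀ (K : Op) (φ : Formula Op) (x y : ℕ) (s : ℕ → M.U),
      φ.Substitutable x (.var y) →
      (M.opSat K (φ.subst x (.var y)) s ↔ M.opSat K φ (Function.update s x (s y))))

/-- A formula is valid if it holds in every structure under every assignment. -/
def Valid {Op : Type} (φ : Formula Op) : Prop :=
  ∀ M : PreStruc Op, IsStruc M → ∀ s : ℕ → M.U, Sat M φ s

/-- `T ⊨ φ`: every structure satisfying all members of `T` (under every
assignment) satisfies `φ` under every assignment. -/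
def Models {Op : Type} (T : Set (Formula Op)) (φ : Formula Op) : Prop :=
  ∀ M : PreStruc Op, IsStruc M → (∀ ψ ∈ T, ∀ s : ℕ → M.U, Sat M ψ s) →
    ∀ s : ℕ → M.U, Sat M φ s

/-- `M ⊨ T`. -/
def SatTheory {Op : Type} (M : PreStruc Op) (T : Set (Formula Op)) : Prop :=
  ∀ φ ∈ T, ∀ s : ℕ → M.U, Sat M φ s

/-- The numeral `n̄`. -/
def numeral : ℕ → Term
  | 0 => .zero
  | n + 1 => .succ (numeral n)

/-- Helper for `φ^s`: replace every free occurrence of a variable `x` not in the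
list `B` of bound variables by the numeral for `s x`. -/
def Term.numSub (s : ℕ → ℕ) (B : List ℕ) : Term → Term
  | .var x => if x ∈ B then .var x else numeral (s x)
  | .zero => .zero
  | .succ t => .succ (t.numSub s B)
  | .add t u => .add (t.numSub s B) (u.numSub s B)
  | .mul t u => .mul (t.numSub s B) (u.numSub s B)

/-- Helper for `φ^s` (carrying the list of bound variables). -/
def Formula.numSub {Op : Type} (s : ℕ → ℕ) : List ℕ → Formula Op → Formula Op
  | B, .eq t u => .eq (t.numSub s B) (u.numSub s B)
  | B, .imp φ ψ => .imp (φ.numSub s B) (ψ.numSub s B)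
  | B, .not φ => .not (φ.numSub s B)
  | B, .all x φ => .all x (φ.numSub s (x :: B))
  | B, .op K φ => .op K (φ.numSub s B)

/-- `φ^s`: the sentence obtained by substituting the numeral for `s x` for each
free occurrence of each variable `x` in `φ`. -/
def assignSub {Op : Type} (s : ℕ → ℕ) (φ : Formula Op) : Formula Op :=
  φ.numSub s []

/-- The intended structure `𝒩_T` of an `L_EA`-theory `T`: standard first-order
part and `𝒩_T ⊨ Kφ[s]` iff `T ⊨ φ^s`. -/
def NStruc (T : Set LEA) : PreStruc Unit where
  U := ℕ
  zero := 0
  succ := Nat.succ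
  add := (· + ·)
  mul := (· * ·)
  opSat := fun _ φ s => Models T (assignSub s φ)

/-- `T` is true: `𝒩_T ⊨ T`. -/
def TheoryTrue (T : Set LEA) : Prop := SatTheory (NStruc T) T

/-- `On(φ)`: the set of `α < ω·ω` such that `K^α` occurs in `φ`. -/
def Formula.On : LOO → Set Ord2
  | .eq _ _ => ∅
  | .imp φ ψ => φ.On ∪ ψ.On
  | .not φ => φ.On
  | .all _ φ => φ.On
  | .op α φ => insert α φ.On

/-- `T ∩ α`: the members of `T` all of whose superscripts are `< α`. -/
def cut (T : Set LOO) (α : Ord2) : Set LOO := {φ | φ ∈ T ∧ ∀ β ∈ φ.On, β < α}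

/-- The intended structure `𝓜_T` of an `L_{ω·ω}`-theory `T`: standard
first-order part and `𝓜_T ⊨ K^αφ[s]` iff `T∩α ⊨ φ^s`. -/
def MStruc (T : Set LOO) : PreStruc Ord2 where
  U := ℕ
  zero := 0
  succ := Nat.succ
  add := (· + ·)
  mul := (· * ·)
  opSat := fun α φ s => Models (cut T α) (assignSub s φ)

/-- The least element of a set `A ⊆ ω·ω` (junk value if `A` is empty):
first minimize the `ω`-coefficient, then the finite part. -/
noncomputable def leastIn (A : Set Ord2) : Ord2 :=
  let a := sInf {a : ℕ | ∃ b : ℕ, toLex (a, b) ∈ A}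
  toLex (a, sInf {b : ℕ | toLex (a, b) ∈ A})

/-- The stratifier given by `X ⊆ ω·ω`: fixes atomic formulas, commutes with
`→`, `¬`, `∀`, and sends `Kφ₀` to `K^α φ₀⁺` where `α` is the least element of
`X \ On(φ₀⁺)`. -/
noncomputable def stratify (X : Set Ord2) : LEA → LOO
  | .eq t u => .eq t u
  | .imp φ ψ => .imp (stratify X φ) (stratify X ψ)
  | .not φ => .not (stratify X φ)
  | .all x φ => .all x (stratify X φ)
  | .op _ φ => .op (leastIn (X \ (stratify X φ).On)) (stratify X φ)

/-- A stratifier is the map given by some infinite `X ⊆ ω·ω`. -/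
def IsStratifier (f : LEA → LOO) : Prop :=
  ∃ X : Set Ord2, X.Infinite ∧ f = stratify X

/-- `T^⊕ = { φ⁺ : φ ∈ T, ⁺ a stratifier }`. -/
def oplus (T : Set LEA) : Set LOO :=
  {ψ | ∃ φ ∈ T, ∃ f : LEA → LOO, IsStratifier f ∧ ψ = f φ}

/-- The veristratifier: the stratifier given by `X = {ω·1, ω·2, ω·3, …}`. -/
noncomputable def veristratifier : LEA → LOO :=
  stratify {α : Ord2 | ∃ n : ℕ, α = omul (n + 1) 0}

/-- `φ⁻`: change every `K^α` into `K`. -/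
def Formula.down : LOO → LEA
  | .eq t u => .eq t u
  | .imp φ ψ => .imp φ.down ψ.down
  | .not φ => .not φ.down
  | .all x φ => .all x φ.down
  | .op _ φ => .op () φ.down

/-- `M⁺` for an `L_{ω·ω}`-structure `M` and a stratifier `⁺`: same universe and
`L_PA`-part, and `M⁺ ⊨ Kφ[s]` iff `M ⊨ (Kφ)⁺[s]`. -/
def upStruc (M : PreStruc Ord2) (f : LEA → LOO) : PreStruc Unit where
  U := M.U
  zero := M.zero
  succ := M.succ
  add := M.add
  mul := M.mul
  opSat := fun _ φ s => Sat M (f (.op () φ)) s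

/-- `M⁻` for an `L_EA`-structure `M`: same universe and `L_PA`-part, and
`M⁻ ⊨ K^αφ[s]` iff `M ⊨ K(φ⁻)[s]`. -/
def downStruc (M : PreStruc Unit) : PreStruc Ord2 where
  U := M.U
  zero := M.zero
  succ := M.succ
  add := M.add
  mul := M.mul
  opSat := fun _ φ s => Sat M (.op () φ.down) s

open Classical in
/-- `h(φ)`: replace every occurrence of `K^α` with `α ∈ X` by `K^{h(α)}`. -/
noncomputable def mapOps (X : Set Ord2) (h : Ord2 → Ord2) : LOO → LOO
  | .eq t u => .eq t u
  | .imp φ ψ => .imp (mapOps X h φ) (mapOps X h ψ)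
  | .not φ => .not (mapOps X h φ)
  | .all x φ => .all x (mapOps X h φ)
  | .op α φ => .op (if α ∈ X then h α else α) (mapOps X h φ)

/-- `h : X → ω·ω` is order preserving. -/
def OrdPresOn (X : Set Ord2) (h : Ord2 → Ord2) : Prop :=
  ∀ a ∈ X, ∀ b ∈ X, a < b → h a < h b

/-- A uniform `L_{ω·ω}`-theory. -/
def Uniform (T : Set LOO) : Prop :=
  ∀ (X : Set Ord2) (h : Ord2 → Ord2), OrdPresOn X h →
    ∀ φ ∈ T, φ.On ⊆ X → mapOps X h φ ∈ T

/-- `h(M)`: same universe and `L_PA`-part as `M`, and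
`h(M) ⊨ K^αφ[s]` iff `M ⊨ h(K^αφ)[s]`. -/
noncomputable def hStruc (X : Set Ord2) (h : Ord2 → Ord2) (M : PreStruc Ord2) :
    PreStruc Ord2 where
  U := M.U
  zero := M.zero
  succ := M.succ
  add := M.add
  mul := M.mul
  opSat := fun α φ s => Sat M (mapOps X h (.op α φ)) s

/-- The depth of nesting of the operators. -/
def Formula.depth {Op : Type} : Formula Op → ℕ
  | .eq _ _ => 0
  | .imp φ ψ => max φ.depth ψ.depth
  | .not φ => φ.depth
  | .all _ φ => φ.depth
  | .op _ φ => φ.depth + 1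

/-- `∀x₁ ⋯ ∀xₙ φ`. -/
def Formula.alls {Op : Type} : List ℕ → Formula Op → Formula Op
  | [], φ => φ
  | x :: l, φ => .all x (Formula.alls l φ)

/-- `ψ` is a universal closure of `φ`: a sentence of the form `∀x₁ ⋯ ∀xₙ φ`. -/
def IsUClosure {Op : Type} (φ ψ : Formula Op) : Prop :=
  ψ.IsSentence ∧ ∃ l : List ℕ, ψ = Formula.alls l φ

/-- The schema `E₁`: universal closures of `Kφ`, `φ` valid. -/
def E1 : Set LEA := {χ | ∃ φ : LEA, Valid φ ∧ IsUClosure (KK φ) χ}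

/-- The schema `E₂`: universal closures of `K(φ→ψ) → Kφ → Kψ`. -/
def E2 : Set LEA :=
  {χ | ∃ φ ψ : LEA, IsUClosure (.imp (KK (.imp φ ψ)) (.imp (KK φ) (KK ψ))) χ}

/-- The schema `E′₂`: universal closures of `K(φ→ψ) → Kφ → Kψ` with
`depth(φ) ≤ depth(ψ)`. -/
def E2' : Set LEA :=
  {χ | ∃ φ ψ : LEA, φ.depth ≤ ψ.depth ∧
    IsUClosure (.imp (KK (.imp φ ψ)) (.imp (KK φ) (KK ψ))) χ}

/-- The schema `E₃`: universal closures of `Kφ → φ`. -/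
def E3 : Set LEA := {χ | ∃ φ : LEA, IsUClosure (.imp (KK φ) φ) χ}

/-- The Assigned Validity schema: all `φ^s` with `φ` valid, `s : ℕ → ℕ`. -/
def AssignedValidity : Set LEA :=
  {χ | ∃ (φ : LEA) (s : ℕ → ℕ), Valid φ ∧ χ = assignSub s φ}

/-- `K(T₀) = { Kφ : φ ∈ T₀ }`. -/
def KSet (T : Set LEA) : Set LEA := {χ | ∃ φ ∈ T, χ = KK φ}

/-- Membership in the smallest `K`-closed set containing `S`. -/
inductive KClosureMem (S : Set LEA) : LEA → Prop
  | base {φ : LEA} : φ ∈ S → KClosureMem S φ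
  | k {φ : LEA} : KClosureMem S φ → KClosureMem S (KK φ)

/-- The smallest `K`-closed theory containing `S`. -/
def KClosure (S : Set LEA) : Set LEA := {φ | KClosureMem S φ}

/-- `T₀` is upgeneric: `𝓜_{T^⊕} ⊨ T₀^⊕` for every `L_EA`-theory `T ⊇ T₀`. -/
def Upgeneric (T₀ : Set LEA) : Prop :=
  ∀ T : Set LEA, IsTheory T → T₀ ⊆ T → SatTheory (MStruc (oplus T)) (oplus T₀)

/-- A concrete Gödel numbering of terms. -/
def encodeTerm : Term → ℕ
  | .var x => Nat.pair 0 x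
  | .zero => Nat.pair 1 0
  | .succ t => Nat.pair 2 (encodeTerm t)
  | .add t u => Nat.pair 3 (Nat.pair (encodeTerm t) (encodeTerm u))
  | .mul t u => Nat.pair 4 (Nat.pair (encodeTerm t) (encodeTerm u))

/-- A concrete Gödel numbering of `L_EA`-formulas. -/
def encodeLEA : LEA → ℕ
  | .eq t u => Nat.pair 0 (Nat.pair (encodeTerm t) (encodeTerm u))
  | .imp φ ψ => Nat.pair 1 (Nat.pair (encodeLEA φ) (encodeLEA ψ))
  | .not φ => Nat.pair 2 (encodeLEA φ)
  | .all x φ => Nat.pair 3 (Nat.pair x (encodeLEA φ))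
  | .op _ φ => Nat.pair 4 (encodeLEA φ)

/-- `T` is recursively enumerable: the set of Gödel numbers of its members is r.e. -/
def RETheory (T : Set LEA) : Prop := REPred fun n => ∃ φ ∈ T, encodeLEA φ = n

/-- `T₀` is r.e.-upgeneric: `T₀` is r.e. and `𝓜_{T^⊕} ⊨ T₀^⊕` for every r.e.
`L_EA`-theory `T ⊇ T₀`. -/
def REUpgeneric (T₀ : Set LEA) : Prop :=
  RETheory T₀ ∧
    ∀ T : Set LEA, IsTheory T → RETheory T → T₀ ⊆ T →
      SatTheory (MStruc (oplus T)) (oplus T₀)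

/-! The indices occurring in `φ⁺` are exactly the first `depth(φ)` elements of `X`: this is
invariant under `→`, since the first `m` and the first `n` elements together are the first
`max m n`, and under `K`, which adds the next element of `X`. Hence `(Kφ)⁺` carries the
`depth(φ)`-th element of `X`, and enumerating an infinite subset of the well-order `ω·ω` in
increasing order is strictly monotone. -/

theorem isLeast_leastIn {A : Set Ord2} (h : A.Nonempty) : IsLeast A (leastIn A) := by
  set a := sInf {a : ℕ | ∃ b : ℕ, toLex (a, b) ∈ A}
  obtain ⟨x, hx⟩ := h
  have hfst : {a : ℕ | ∃ b : ℕ, toLex (a, b) ∈ A}.Nonempty := ⟨(ofLex x).1, (ofLex x).2, hx⟩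
  refine ⟨Nat.sInf_mem (Nat.sInf_mem hfst), fun y hy => ?_⟩
  change toLex (a, sInf {b : ℕ | toLex (a, b) ∈ A}) ≤ toLex ((ofLex y).1, (ofLex y).2)
  have ha : a ≤ (ofLex y).1 := Nat.sInf_le ⟨(ofLex y).2, hy⟩
  rw [Prod.Lex.le_iff]
  rcases ha.lt_or_eq with ha | ha
  · exact Or.inl ha
  · exact Or.inr ⟨ha, Nat.sInf_le (show toLex (a, (ofLex y).2) ∈ A by rw [ha]; exact hy)⟩

section Enumeration

variable (X : Set Ord2)

noncomputable def initSeg : ℕ → Set Ord2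
  | 0 => ∅
  | n + 1 => insert (leastIn (X \ initSeg n)) (initSeg n)

/-- The `n`-th element of an infinite `X`, counting from `0`. -/
noncomputable def nthIn (n : ℕ) : Ord2 := leastIn (X \ initSeg X n)

theorem initSeg_succ (n : ℕ) : initSeg X (n + 1) = insert (nthIn X n) (initSeg X n) := rfl

theorem initSeg_mono : Monotone (initSeg X) :=
  monotone_nat_of_le_succ fun n => by
    rw [initSeg_succ]
    exact Set.subset_insert _ _

theorem initSeg_finite (n : ℕ) : (initSeg X n).Finite := by
  induction n with
  | zero => exact Set.finite_empty
  | succ n ih => exact ih.insert _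

theorem nthIn_mem_diff (hX : X.Infinite) (n : ℕ) : nthIn X n ∈ X \ initSeg X n :=
  (isLeast_leastIn (hX.sdiff (initSeg_finite X n)).nonempty).1

theorem nthIn_strictMono (hX : X.Infinite) : StrictMono (nthIn X) := by
  refine strictMono_nat_of_lt_succ fun n => lt_of_le_of_ne ?_ fun h => ?_
  · obtain ⟨hmem, hnot⟩ := nthIn_mem_diff X hX (n + 1)
    rw [initSeg_succ, Set.mem_insert_iff, not_or] at hnot
    exact (isLeast_leastIn (hX.sdiff (initSeg_finite X n)).nonempty).2 ⟨hmem, hnot.2⟩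
  · have hnot := (nthIn_mem_diff X hX (n + 1)).2
    rw [initSeg_succ, ← h] at hnot
    exact hnot (Set.mem_insert _ _)

theorem on_stratify (φ : LEA) : (stratify X φ).On = initSeg X φ.depth := by
  induction φ with
  | eq t u => rfl
  | imp φ ψ ihφ ihψ =>
    change (stratify X φ).On ∪ (stratify X ψ).On = initSeg X (max φ.depth ψ.depth)
    rw [ihφ, ihψ]
    exact ((initSeg_mono X).map_sup _ _).symm
  | not φ ih => exact ih
  | all x φ ih => exact ih
  | op K φ ih =>
    change insert (leastIn (X \ (stratify X φ).On)) (stratify X φ).On = initSeg X (φ.depth + 1)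
    rw [ih, initSeg_succ, nthIn]

theorem stratify_KK (φ : LEA) :
    stratify X (KK φ) = .op (nthIn X φ.depth) (stratify X φ) := by
  change Formula.op (leastIn (X \ (stratify X φ).On)) _ = _
  rw [on_stratify, nthIn]

end Enumeration

/-- If `(Kφ)⁺ ≡ K^α φ⁺` and `(Kψ)⁺ ≡ K^β ψ⁺` then
`depth(φ) < depth(ψ)` iff `α < β`. -/
theorem depth_lt_iff_lt (f : LEA → LOO) (hf : IsStratifier f) (φ ψ : LEA)
    (α β : Ord2) (hα : f (KK φ) = .op α (f φ)) (hβ : f (KK ψ) = .op β (f ψ)) :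
    φ.depth < ψ.depth ↔ α < β := by
  obtain ⟨X, hX, rfl⟩ := hf
  obtain ⟨rfl, -⟩ := Formula.op.inj (hα.symm.trans (stratify_KK X φ))
  obtain ⟨rfl, -⟩ := Formula.op.inj (hβ.symm.trans (stratify_KK X ψ))
  exact (nthIn_strictMono X hX).lt_iff_lt.symm

end FCT
end

section
/- The Assigned Validity schema, consisting of all sentences φ^s where φ is a valid L_EA-formula and s is an assignment into ℕ, is upgeneric: for every L_EA-theory T containing Assigned Validity, 𝓜_{T^⊕} ⊨ (Assigned Validity)^⊕. -/
namespace FCT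

/-!
An instance of Assigned Validity in `T^⊕` is `(φ^s)⁺ = (φ⁺)^s` with `φ` valid and `⁺` a
stratifier. Pull `𝓜 = 𝓜_{T^⊕}` back along `⁺` to the `L_EA`-structure `𝓜⁺` with
`𝓜⁺ ⊨ Kφ[s]` iff `𝓜 ⊨ (Kφ)⁺[s]`; then `𝓜⁺ ⊨ χ[s]` iff `𝓜 ⊨ χ⁺[s]`, and as `𝓜` has a standard
first-order part, `𝓜 ⊨ (φ⁺)^s` iff `𝓜 ⊨ φ⁺[s]`. So it suffices that `𝓜⁺` satisfies the three
conditions on structures, for then `𝓜⁺ ⊨ φ[s]` by validity.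

Conditions (1) and (3) are syntactic bookkeeping. Condition (2) reduces to `T∩α ⊨ ψ₁` iff
`T∩α ⊨ ψ₂` for alphabetic variants `ψ₁, ψ₂`, i.e. to alphabetic variants being equivalent in
every structure. In the induction on formulas this fails to be immediate at an operator, where
the variants are matched only relative to the bound variables in scope: there the free variables
on both sides are renamed, one at a time and using weak substitution (3), to common fresh
variables, after which the two formulas are variants in the closed sense that (2) speaks of.
-/

section Formulas

variable {Op : Type}

lemma varMatch_right_unique {ρ : List (ℕ × ℕ)} {x y y' : ℕ}
    (h : varMatch ρ x y) (h' : varMatch ρ x y') : y = y' := by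
  induction ρ with
  | nil => exact h.symm.trans h'
  | cons p ρ ih => simp only [varMatch] at h h'; grind

lemma varMatch_left_unique {ρ : List (ℕ × ℕ)} {x x' y : ℕ}
    (h : varMatch ρ x y) (h' : varMatch ρ x' y) : x = x' := by
  induction ρ with
  | nil => exact h.trans h'.symm
  | cons p ρ ih => simp only [varMatch] at h h'; grind

lemma varMatch_iff_eq {ρ : List (ℕ × ℕ)} {n x y : ℕ} (hρ : ∀ p ∈ ρ, p.1 < n ∧ p.2 < n)
    (hxy : n ≤ x ∨ n ≤ y) : varMatch ρ x y ↔ x = y := by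
  induction ρ with
  | nil => rfl
  | cons p ρ ih =>
    have hp := hρ p List.mem_cons_self
    simp only [varMatch, ih fun q hq => hρ q (List.mem_cons_of_mem p hq)]
    omega

lemma exists_upper_bound_pairs (ρ : List (ℕ × ℕ)) : ∃ n, ∀ p ∈ ρ, p.1 < n ∧ p.2 < n := by
  refine ⟨(ρ.map fun p => p.1 + p.2).sum + 1, fun p hp => ?_⟩
  have := List.le_sum_of_mem (List.mem_map_of_mem (f := fun p : ℕ × ℕ => p.1 + p.2) hp)
  omega

def Term.maxv : Term → ℕ
  | .var x => x + 1
  | .zero => 0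
  | .succ t => t.maxv
  | .add t u => max t.maxv u.maxv
  | .mul t u => max t.maxv u.maxv

def Formula.maxv : Formula Op → ℕ
  | .eq t u => max t.maxv u.maxv
  | .imp φ ψ => max φ.maxv ψ.maxv
  | .not φ => φ.maxv
  | .all x φ => max (x + 1) φ.maxv
  | .op _ φ => φ.maxv

lemma Term.lt_maxv {t : Term} {x : ℕ} (h : x ∈ t.vars) : x < t.maxv := by
  induction t with
  | var y => simp_all [Term.vars, Term.maxv]
  | zero => simp [Term.vars] at h
  | succ t ih => exact ih h
  | add t u iht ihu | mul t u iht ihu =>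
    exact h.elim (fun h => lt_max_of_lt_left (iht h)) (fun h => lt_max_of_lt_right (ihu h))

lemma Formula.lt_maxv {φ : Formula Op} {x : ℕ} (h : x ∈ φ.free) : x < φ.maxv := by
  induction φ with
  | eq t u =>
    exact h.elim (fun h => lt_max_of_lt_left (t.lt_maxv h))
      (fun h => lt_max_of_lt_right (u.lt_maxv h))
  | imp φ ψ ihφ ihψ =>
    exact h.elim (fun h => lt_max_of_lt_left (ihφ h)) (fun h => lt_max_of_lt_right (ihψ h))
  | not φ ih | op _ φ ih => exact ih h
  | all y φ ih => exact lt_max_of_lt_right (ih h.1)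

lemma Term.subst_of_not_mem {t : Term} {x : ℕ} {u : Term} (h : x ∉ t.vars) :
    Term.subst x u t = t := by
  induction t <;>
    simp only [Term.vars, Term.subst, Set.mem_union, Set.mem_singleton_iff, not_or] at h ⊢ <;> grind

lemma Formula.subst_of_not_mem {φ : Formula Op} {x : ℕ} {u : Term} (h : x ∉ φ.free) :
    φ.subst x u = φ := by
  induction φ with
  | all y φ ih =>
    by_cases hyx : y = x
    · simp [Formula.subst, hyx]
    · simp_all [Formula.free, Formula.subst, Ne.symm hyx]
  | _ => simp_all [Formula.free, Formula.subst, Term.subst_of_not_mem]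

lemma Term.vars_subst_var (t : Term) (x j : ℕ) :
    (Term.subst x (.var j) t).vars ⊆ (t.vars \ {x}) ∪ {j} := by
  induction t with
  | var y => by_cases hyx : y = x <;> simp [Term.subst, Term.vars, hyx]
  | zero => simp [Term.subst, Term.vars]
  | succ t ih => exact ih
  | add t u iht ihu | mul t u iht ihu =>
    simp only [Term.subst, Term.vars]
    grind

lemma Formula.free_subst_var (φ : Formula Op) (x j : ℕ) :
    (φ.subst x (.var j)).free ⊆ (φ.free \ {x}) ∪ {j} := by
  induction φ with
  | eq t u =>
    have := t.vars_subst_var x j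
    have := u.vars_subst_var x j
    simp only [Formula.subst, Formula.free]
    grind
  | imp φ ψ ihφ ihψ => simp only [Formula.subst, Formula.free]; grind
  | not φ ih | op _ φ ih => exact ih
  | all y φ ih =>
    by_cases hyx : y = x <;> simp only [Formula.subst, hyx, ↓reduceIte, Formula.free] <;> grind

lemma Term.maxv_subst_var (t : Term) (x j : ℕ) :
    (Term.subst x (.var j) t).maxv ≤ max t.maxv (j + 1) := by
  induction t with
  | var y => by_cases hyx : y = x <;> simp [Term.subst, Term.maxv, hyx]
  | zero => simp [Term.subst, Term.maxv]
  | succ t ih => exact ih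
  | add t u iht ihu | mul t u iht ihu => simp only [Term.subst, Term.maxv]; omega

lemma Formula.maxv_subst_var (φ : Formula Op) (x j : ℕ) :
    (φ.subst x (.var j)).maxv ≤ max φ.maxv (j + 1) := by
  induction φ with
  | eq t u =>
    have := t.maxv_subst_var x j
    have := u.maxv_subst_var x j
    simp only [Formula.subst, Formula.maxv]; omega
  | imp φ ψ ihφ ihψ => simp only [Formula.subst, Formula.maxv]; omega
  | not φ ih | op _ φ ih => exact ih
  | all y φ ih =>
    by_cases hyx : y = x <;> simp only [Formula.subst, hyx, ↓reduceIte, Formula.maxv] <;> omega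

lemma Formula.substitutable_var_of_maxv_le {φ : Formula Op} {x j : ℕ} (h : φ.maxv ≤ j) :
    φ.Substitutable x (.var j) := by
  induction φ with
  | eq => trivial
  | imp φ ψ ihφ ihψ => exact ⟨ihφ (le_of_max_le_left h), ihψ (le_of_max_le_right h)⟩
  | not φ ih | op _ φ ih => exact ih h
  | all y φ ih =>
    simp only [Formula.maxv, max_le_iff] at h
    exact Or.inr (Or.inr ⟨by simp [Term.vars]; omega, ih h.2⟩)

lemma Term.exists_varMatch_left {ρ : List (ℕ × ℕ)} {t u : Term} {x : ℕ}
    (h : t.alpha ρ u) (hx : x ∈ t.vars) : ∃ y, varMatch ρ x y ∧ y ∈ u.vars := by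
  induction t generalizing u <;> cases u <;>
    simp only [Term.alpha, Term.vars, Set.mem_union, Set.mem_singleton_iff] at h hx ⊢ <;> grind

lemma Term.exists_varMatch_right {ρ : List (ℕ × ℕ)} {t u : Term} {y : ℕ}
    (h : t.alpha ρ u) (hy : y ∈ u.vars) : ∃ x, varMatch ρ x y ∧ x ∈ t.vars := by
  induction t generalizing u <;> cases u <;>
    simp only [Term.alpha, Term.vars, Set.mem_union, Set.mem_singleton_iff] at h hy ⊢ <;> grind

lemma Formula.exists_varMatch_left {ρ : List (ℕ × ℕ)} {φ ψ : Formula Op} {x : ℕ}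
    (h : φ.alpha ρ ψ) (hx : x ∈ φ.free) : ∃ y, varMatch ρ x y ∧ y ∈ ψ.free := by
  induction φ generalizing ψ ρ <;> cases ψ <;>
    simp only [Formula.alpha, Formula.free, Set.mem_union, Set.mem_sdiff, Set.mem_singleton_iff]
      at h hx ⊢
  case all a φ ih b ψ =>
    obtain ⟨y, hy, hyψ⟩ := ih h hx.1
    simp only [varMatch] at hy
    grind
  all_goals grind [Term.exists_varMatch_left]

lemma Formula.exists_varMatch_right {ρ : List (ℕ × ℕ)} {φ ψ : Formula Op} {y : ℕ}
    (h : φ.alpha ρ ψ) (hy : y ∈ ψ.free) : ∃ x, varMatch ρ x y ∧ x ∈ φ.free := by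
  induction φ generalizing ψ ρ <;> cases ψ <;>
    simp only [Formula.alpha, Formula.free, Set.mem_union, Set.mem_sdiff, Set.mem_singleton_iff]
      at h hy ⊢
  case all a φ ih b ψ =>
    obtain ⟨x, hx, hxφ⟩ := ih h hy.1
    simp only [varMatch] at hx
    grind
  all_goals grind [Term.exists_varMatch_right]

lemma Term.alpha_mono {ρ ρ' : List (ℕ × ℕ)} {t u : Term}
    (hρ : ∀ x ∈ t.vars, ∀ y ∈ u.vars, varMatch ρ x y ↔ varMatch ρ' x y)
    (h : t.alpha ρ u) : t.alpha ρ' u := by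
  induction t generalizing u <;> cases u <;>
    simp only [Term.alpha, Term.vars, Set.mem_union, Set.mem_singleton_iff] at h hρ ⊢ <;> grind

lemma Formula.alpha_mono {ρ ρ' : List (ℕ × ℕ)} {φ ψ : Formula Op}
    (hρ : ∀ x ∈ φ.free, ∀ y ∈ ψ.free, varMatch ρ x y ↔ varMatch ρ' x y)
    (h : φ.alpha ρ ψ) : φ.alpha ρ' ψ := by
  induction φ generalizing ψ ρ ρ' <;> cases ψ <;>
    simp only [Formula.alpha, Formula.free, Set.mem_union, Set.mem_sdiff, Set.mem_singleton_iff]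
      at h hρ ⊢
  case all a φ ih b ψ =>
    refine ih (fun x hx y hy => ?_) h
    simp only [varMatch]
    grind
  all_goals grind [Term.alpha_mono]

lemma Term.alpha_subst_var {ρ : List (ℕ × ℕ)} {t u : Term} {x y j : ℕ}
    (h : t.alpha ρ u) (hxy : varMatch ρ x y) (hj : ∀ p ∈ ρ, p.1 < j ∧ p.2 < j) :
    (Term.subst x (.var j) t).alpha ρ (Term.subst y (.var j) u) := by
  induction t generalizing u with
  | var w =>
    cases u <;> simp only [Term.alpha] at h
    case var w' =>
      by_cases hwx : w = x
      · subst hwx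
        simp [Term.subst, ← varMatch_right_unique h hxy, Term.alpha, varMatch_iff_eq hj]
      · have hw'y : w' ≠ y := fun he => hwx (varMatch_left_unique h (he ▸ hxy))
        simpa [Term.subst, hwx, hw'y, Term.alpha] using h
  | _ => cases u <;> simp_all [Term.alpha, Term.subst]

lemma Formula.alpha_subst_var {ρ : List (ℕ × ℕ)} {φ ψ : Formula Op} {x y j : ℕ}
    (h : φ.alpha ρ ψ) (hxy : varMatch ρ x y) (hφ : φ.maxv ≤ j) (hψ : ψ.maxv ≤ j)
    (hj : ∀ p ∈ ρ, p.1 < j ∧ p.2 < j) :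
    (φ.subst x (.var j)).alpha ρ (ψ.subst y (.var j)) := by
  induction φ generalizing ψ ρ with
  | all a φ ih =>
    cases ψ <;> simp only [Formula.alpha] at h
    case all b ψ =>
      simp only [Formula.maxv, max_le_iff] at hφ hψ
      by_cases hax : a = x <;> by_cases hby : b = y
      · simpa [Formula.subst, hax, hby, Formula.alpha] using h
      · have hyψ : y ∉ ψ.free := fun hy => by
          obtain ⟨x', hx', -⟩ := Formula.exists_varMatch_right h hy
          simp only [varMatch] at hx'
          grind [varMatch_left_unique]
        simpa [Formula.subst, hax, hby, Formula.subst_of_not_mem hyψ, Formula.alpha] using h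
      · have hxφ : x ∉ φ.free := fun hx => by
          obtain ⟨y', hy', -⟩ := Formula.exists_varMatch_left h hx
          simp only [varMatch] at hy'
          grind [varMatch_right_unique]
        simpa [Formula.subst, hax, hby, Formula.subst_of_not_mem hxφ, Formula.alpha] using h
      · simp only [Formula.subst, hax, hby, ↓reduceIte, Formula.alpha]
        refine ih h (Or.inr ⟨Ne.symm hax, Ne.symm hby, hxy⟩) hφ.2 hψ.2 ?_
        simp only [List.mem_cons, forall_eq_or_imp]
        exact ⟨⟨by omega, by omega⟩, hj⟩
  | eq t₁ t₂ =>
    cases ψ <;> simp only [Formula.alpha] at h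
    case eq u₁ u₂ => exact ⟨Term.alpha_subst_var h.1 hxy hj, Term.alpha_subst_var h.2 hxy hj⟩
  | imp φ₁ φ₂ ih₁ ih₂ =>
    cases ψ <;> simp only [Formula.alpha] at h
    case imp ψ₁ ψ₂ =>
      simp only [Formula.maxv, max_le_iff] at hφ hψ
      exact ⟨ih₁ h.1 hxy hφ.1 hψ.1 hj, ih₂ h.2 hxy hφ.2 hψ.2 hj⟩
  | not φ ih =>
    cases ψ <;> simp only [Formula.alpha] at h
    case not ψ => exact ih h hxy hφ hψ hj
  | op K φ ih =>
    cases ψ <;> simp only [Formula.alpha] at h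
    case op K' ψ => exact ⟨h.1, ih h.2 hxy hφ hψ hj⟩

lemma Term.eval_eq_of_alpha (M : PreStruc Op) {ρ : List (ℕ × ℕ)} {t u : Term}
    {s₁ s₂ : ℕ → M.U} (h : t.alpha ρ u) (hs : ∀ x y, varMatch ρ x y → s₁ x = s₂ y) :
    t.eval M s₁ = u.eval M s₂ := by
  induction t generalizing u <;> cases u <;> simp only [Term.alpha, Term.eval] at h ⊢ <;> grind

lemma Term.numSub_congr {t : Term} {s s' : ℕ → ℕ} {B : List ℕ}
    (h : ∀ x ∈ t.vars, x ∉ B → s x = s' x) : t.numSub s B = t.numSub s' B := by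
  induction t <;> simp_all [Term.vars, Term.numSub]

lemma Formula.numSub_congr {φ : Formula Op} {s s' : ℕ → ℕ} {B : List ℕ}
    (h : ∀ x ∈ φ.free, x ∉ B → s x = s' x) : φ.numSub s B = φ.numSub s' B := by
  induction φ generalizing B with
  | eq t u =>
    simp only [Formula.numSub, Term.numSub_congr fun x hx => h x (Or.inl hx),
      Term.numSub_congr fun x hx => h x (Or.inr hx)]
  | all y φ ih =>
    simp only [Formula.numSub]
    exact congrArg _ (ih fun x hx hxB => h x ⟨hx, by simp_all⟩ (by simp_all))
  | _ => simp_all [Formula.free, Formula.numSub]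

lemma Term.numSub_numeral (s : ℕ → ℕ) (B : List ℕ) (n : ℕ) :
    (numeral n).numSub s B = numeral n := by
  induction n <;> simp_all [numeral, Term.numSub]

lemma Term.numSub_numSub {t : Term} {s s' : ℕ → ℕ} {B C : List ℕ} (hCB : ∀ x ∈ C, x ∈ B) :
    (t.numSub s B).numSub s' C = t.numSub (fun x => if x ∈ B then s' x else s x) C := by
  induction t with
  | var y =>
    by_cases hyB : y ∈ B
    · by_cases hyC : y ∈ C <;> simp [Term.numSub, hyB, hyC]
    · have hyC : y ∉ C := fun h => hyB (hCB y h)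
      simp [Term.numSub, hyB, hyC, Term.numSub_numeral]
  | _ => simp_all [Term.numSub]

lemma Formula.numSub_numSub {φ : Formula Op} {s s' : ℕ → ℕ} {B C : List ℕ}
    (hCB : ∀ x ∈ C, x ∈ B) :
    (φ.numSub s B).numSub s' C = φ.numSub (fun x => if x ∈ B then s' x else s x) C := by
  induction φ generalizing B C with
  | eq t u => simp [Formula.numSub, Term.numSub_numSub hCB]
  | all y φ ih =>
    simp only [Formula.numSub]
    rw [ih (by simp_all)]
    congr 1
    refine Formula.numSub_congr fun x _ hxC => ?_
    simp only [List.mem_cons, not_or] at hxC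
    simp [hxC.1]
  | _ => simp_all [Formula.numSub]

lemma Term.numSub_subst_var {t : Term} {x y : ℕ} {s : ℕ → ℕ} {B : List ℕ} (hx : x ∉ B)
    (hy : y ∉ B) :
    (Term.subst x (.var y) t).numSub s B = t.numSub (Function.update s x (s y)) B := by
  induction t with
  | var w => by_cases hwx : w = x <;> simp_all [Term.subst, Term.numSub, Function.update]
  | _ => simp_all [Term.subst, Term.numSub]

lemma Formula.numSub_subst_var {φ : Formula Op} {x y : ℕ} {s : ℕ → ℕ} {B : List ℕ}
    (hsub : φ.Substitutable x (.var y)) (hx : x ∉ B) (hy : y ∉ B) :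
    (φ.subst x (.var y)).numSub s B = φ.numSub (Function.update s x (s y)) B := by
  induction φ generalizing B with
  | eq t u => simp [Formula.subst, Formula.numSub, Term.numSub_subst_var hx hy]
  | imp φ ψ ihφ ihψ => simp [Formula.subst, Formula.numSub, ihφ hsub.1 hx hy, ihψ hsub.2 hx hy]
  | not φ ih | op _ φ ih => simp [Formula.subst, Formula.numSub, ih hsub hx hy]
  | all z φ ih =>
    by_cases hzx : z = x
    · subst hzx
      simp only [Formula.subst, ↓reduceIte, Formula.numSub]
      refine congrArg _ (Formula.numSub_congr fun w _ hw => ?_)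
      simp only [List.mem_cons, not_or] at hw
      simp [hw.1]
    simp only [Formula.subst, hzx, ↓reduceIte, Formula.numSub]
    rcases hsub with hxz | hxφ | ⟨hzy, hsub⟩
    · exact absurd hxz.symm hzx
    · rw [Formula.subst_of_not_mem hxφ]
      refine congrArg _ (Formula.numSub_congr fun w hw _ => ?_)
      simp [show w ≠ x from fun e => hxφ (e ▸ hw)]
    · simp only [Term.vars, Set.mem_singleton_iff] at hzy
      rw [ih hsub (by simp [hx, Ne.symm hzx]) (by simp [hy, Ne.symm hzy])]

def BoundMatch (ρ : List (ℕ × ℕ)) (B₁ B₂ : List ℕ) : Prop :=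
  ∀ x y, varMatch ρ x y → (x ∈ B₁ ∧ y ∈ B₂) ∨ (x ∉ B₁ ∧ y ∉ B₂ ∧ x = y)

lemma Term.alpha_numSub {s : ℕ → ℕ} {ρ : List (ℕ × ℕ)} {t u : Term} {B₁ B₂ : List ℕ}
    (h : t.alpha ρ u) (hB : BoundMatch ρ B₁ B₂) : (t.numSub s B₁).alpha ρ (u.numSub s B₂) := by
  induction t generalizing u with
  | var w =>
    cases u <;> simp only [Term.alpha] at h
    case var w' =>
      rcases hB w w' h with ⟨h₁, h₂⟩ | ⟨h₁, h₂, rfl⟩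
      · simpa [Term.numSub, h₁, h₂, Term.alpha] using h
      · simp only [Term.numSub, h₁, ↓reduceIte]
        induction s w <;> simp_all [numeral, Term.alpha]
  | _ => cases u <;> simp_all [Term.alpha, Term.numSub]

lemma Formula.alpha_numSub {s : ℕ → ℕ} {ρ : List (ℕ × ℕ)} {φ ψ : Formula Op} {B₁ B₂ : List ℕ}
    (h : φ.alpha ρ ψ) (hB : BoundMatch ρ B₁ B₂) : (φ.numSub s B₁).alpha ρ (ψ.numSub s B₂) := by
  induction φ generalizing ψ ρ B₁ B₂ with
  | all a φ ih =>
    cases ψ <;> simp only [Formula.alpha] at h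
    case all b ψ =>
      refine ih h fun x y hxy => ?_
      simp only [varMatch] at hxy
      rcases hxy with ⟨rfl, rfl⟩ | ⟨hxa, hyb, hxy⟩
      · simp
      · have := hB x y hxy
        simp only [List.mem_cons]
        grind
  | eq t₁ t₂ =>
    cases ψ <;> simp only [Formula.alpha] at h
    case eq u₁ u₂ => exact ⟨Term.alpha_numSub h.1 hB, Term.alpha_numSub h.2 hB⟩
  | _ => cases ψ <;> simp_all [Formula.alpha, Formula.numSub]

section Structure

variable {M : PreStruc Op}

lemma opSat_iff_opSat_subst_fresh (hM : IsStruc M) (K : Op) {χ : Formula Op} {j : ℕ} (z : ℕ)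
    (s : ℕ → M.U) (hχ : χ.maxv ≤ j) :
    M.opSat K χ s ↔ M.opSat K (χ.subst z (.var j)) (Function.update s j (s z)) := by
  rw [hM.2.2 K χ z j _ (Formula.substitutable_var_of_maxv_le hχ)]
  refine hM.1 K χ _ _ fun x hx => ?_
  have hxj : x ≠ j := ((Formula.lt_maxv hx).trans_le hχ).ne
  by_cases hxz : x = z <;> simp [Function.update, hxz, hxj]

/-- The free variables of `φ` below `k` are still to be renamed: the step renames `k` in `φ` and
its partner in `ψ` to the fresh variable `j`. -/
lemma opSat_iff_of_alpha_of_free_lt (hM : IsStruc M) (K : Op) {ρ : List (ℕ × ℕ)} {n : ℕ}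
    (hρ : ∀ p ∈ ρ, p.1 < n ∧ p.2 < n) (k : ℕ) {j : ℕ} {φ ψ : Formula Op} {s₁ s₂ : ℕ → M.U}
    (hnj : n ≤ j) (hφ : φ.maxv ≤ j) (hψ : ψ.maxv ≤ j) (hfree : ∀ x ∈ φ.free, x < k ∨ n ≤ x)
    (h : φ.alpha ρ ψ) (hs : ∀ x y, varMatch ρ x y → s₁ x = s₂ y) :
    M.opSat K φ s₁ ↔ M.opSat K ψ s₂ := by
  induction k generalizing j φ ψ s₁ s₂ with
  | zero =>
    have hmatch : ∀ x ∈ φ.free, ∀ y, varMatch ρ x y ↔ x = y := fun x hx y =>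
      varMatch_iff_eq hρ (Or.inl ((hfree x hx).resolve_left (Nat.not_lt_zero x)))
    calc M.opSat K φ s₁ ↔ M.opSat K φ s₂ :=
          hM.1 K φ s₁ s₂ fun x hx => hs x x ((hmatch x hx x).2 rfl)
      _ ↔ M.opSat K ψ s₂ :=
          hM.2.1 K φ ψ s₂ (Formula.alpha_mono (fun x hx y _ => hmatch x hx y) h)
  | succ k ih =>
    by_cases hk : k ∈ φ.free
    swap
    · refine ih hnj hφ hψ (fun x hx => ?_) h hs
      have := hfree x hx
      have : x ≠ k := fun e => hk (e ▸ hx)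
      omega
    obtain ⟨y, hky, -⟩ := Formula.exists_varMatch_left h hk
    have hjρ : ∀ p ∈ ρ, p.1 < j ∧ p.2 < j := fun p hp => (hρ p hp).imp (by omega) (by omega)
    have hjx : ∀ x, varMatch ρ x j ↔ x = j := fun x => varMatch_iff_eq hρ (Or.inr hnj)
    have hjy : ∀ y, varMatch ρ j y ↔ j = y := fun y => varMatch_iff_eq hρ (Or.inl hnj)
    rw [opSat_iff_opSat_subst_fresh hM K k s₁ hφ, opSat_iff_opSat_subst_fresh hM K y s₂ hψ]
    refine ih (by omega) ((φ.maxv_subst_var k j).trans (max_le (by omega) le_rfl))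
      ((ψ.maxv_subst_var y j).trans (max_le (by omega) le_rfl)) (fun x hx => ?_)
      (Formula.alpha_subst_var h hky hφ hψ hjρ) (fun x y' hxy' => ?_)
    · rcases φ.free_subst_var k j hx with ⟨hx, hxk⟩ | hxj
      · have := hfree x hx
        simp only [Set.mem_singleton_iff] at hxk
        omega
      · simp only [Set.mem_singleton_iff] at hxj
        omega
    · by_cases hxj : x = j
      · subst hxj
        obtain rfl := ((hjy y').1 hxy').symm
        simpa using hs k y hky
      · have hy'j : y' ≠ j := fun e => hxj ((hjx x).1 (e ▸ hxy'))
        simpa [hxj, hy'j] using hs x y' hxy'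

lemma opSat_iff_of_alpha (hM : IsStruc M) (K : Op) {ρ : List (ℕ × ℕ)} {φ ψ : Formula Op}
    {s₁ s₂ : ℕ → M.U} (h : φ.alpha ρ ψ) (hs : ∀ x y, varMatch ρ x y → s₁ x = s₂ y) :
    M.opSat K φ s₁ ↔ M.opSat K ψ s₂ := by
  obtain ⟨m, hm⟩ := exists_upper_bound_pairs ρ
  set n := max m (max φ.maxv ψ.maxv)
  have hρ : ∀ p ∈ ρ, p.1 < n ∧ p.2 < n := fun p hp => (hm p hp).imp (by omega) (by omega)
  exact opSat_iff_of_alpha_of_free_lt hM K hρ n le_rfl (by omega) (by omega)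
    (fun x hx => Or.inl ((Formula.lt_maxv hx).trans_le (by omega))) h hs

lemma sat_iff_of_alpha (hM : IsStruc M) {ρ : List (ℕ × ℕ)} {φ ψ : Formula Op}
    {s₁ s₂ : ℕ → M.U} (h : φ.alpha ρ ψ) (hs : ∀ x y, varMatch ρ x y → s₁ x = s₂ y) :
    Sat M φ s₁ ↔ Sat M ψ s₂ := by
  induction φ generalizing ψ ρ s₁ s₂ with
  | eq t₁ t₂ =>
    cases ψ <;> simp only [Formula.alpha] at h
    case eq u₁ u₂ => simp only [Sat, Term.eval_eq_of_alpha M h.1 hs, Term.eval_eq_of_alpha M h.2 hs]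
  | imp φ₁ φ₂ ih₁ ih₂ =>
    cases ψ <;> simp only [Formula.alpha] at h
    case imp ψ₁ ψ₂ => simp only [Sat, ih₁ h.1 hs, ih₂ h.2 hs]
  | not φ ih =>
    cases ψ <;> simp only [Formula.alpha] at h
    case not ψ => simp only [Sat, ih h hs]
  | all a φ ih =>
    cases ψ <;> simp only [Formula.alpha] at h
    case all b ψ =>
      refine forall_congr' fun v => ih h fun x y hxy => ?_
      simp only [varMatch] at hxy
      rcases hxy with ⟨rfl, rfl⟩ | ⟨hxa, hyb, hxy⟩
      · simp
      · simpa [hxa, hyb] using hs x y hxy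
  | op K φ _ =>
    cases ψ <;> simp only [Formula.alpha] at h
    case op K' ψ =>
      obtain ⟨rfl, h⟩ := h
      exact opSat_iff_of_alpha hM K h hs

lemma models_iff_of_alphaVariant {T : Set (Formula Op)} {φ ψ : Formula Op}
    (h : φ.AlphaVariant ψ) : Models T φ ↔ Models T ψ :=
  forall₄_congr fun _ hM _ s => sat_iff_of_alpha hM h fun _ _ hxy => congrArg s hxy

end Structure

end Formulas

lemma Formula.On_numSub (φ : LOO) (s : ℕ → ℕ) (B : List ℕ) : (φ.numSub s B).On = φ.On := by
  induction φ generalizing B <;> simp_all [Formula.numSub, Formula.On]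

lemma Formula.On_subst (φ : LOO) (x : ℕ) (u : Term) : (φ.subst x u).On = φ.On := by
  induction φ with
  | all y φ ih => by_cases hyx : y = x <;> simp_all [Formula.subst, Formula.On]
  | _ => simp_all [Formula.subst, Formula.On]

section Stratify

variable {X : Set Ord2}

lemma stratify_numSub (φ : LEA) (s : ℕ → ℕ) (B : List ℕ) :
    stratify X (φ.numSub s B) = (stratify X φ).numSub s B := by
  induction φ generalizing B <;> simp_all [Formula.numSub, stratify, Formula.On_numSub]

lemma stratify_assignSub (φ : LEA) (s : ℕ → ℕ) :
    stratify X (assignSub s φ) = assignSub s (stratify X φ) :=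
  stratify_numSub φ s []

lemma stratify_subst (φ : LEA) (x : ℕ) (u : Term) :
    stratify X (φ.subst x u) = (stratify X φ).subst x u := by
  induction φ with
  | all y φ ih => by_cases hyx : y = x <;> simp_all [Formula.subst, stratify]
  | _ => simp_all [Formula.subst, stratify, Formula.On_subst]

lemma free_stratify (φ : LEA) : (stratify X φ).free = φ.free := by
  induction φ <;> simp_all [stratify, Formula.free]

lemma substitutable_stratify {φ : LEA} {x : ℕ} {u : Term} (h : φ.Substitutable x u) :
    (stratify X φ).Substitutable x u := by
  induction φ with
  | all y φ ih => exact h.imp_right (Or.imp (by rw [free_stratify]; exact id) (And.imp_right ih))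
  | _ => simp_all [stratify, Formula.Substitutable]

lemma alpha_stratify {ρ : List (ℕ × ℕ)} {φ ψ : LEA} (h : φ.alpha ρ ψ) :
    (stratify X φ).alpha ρ (stratify X ψ) ∧ (stratify X φ).On = (stratify X ψ).On := by
  induction φ generalizing ψ ρ <;> cases ψ <;> simp only [Formula.alpha] at h
  case eq.eq => exact ⟨h, rfl⟩
  case imp.imp ih₁ ih₂ _ _ =>
    obtain ⟨ha₁, hOn₁⟩ := ih₁ h.1
    obtain ⟨ha₂, hOn₂⟩ := ih₂ h.2
    exact ⟨⟨ha₁, ha₂⟩, by simp only [stratify, Formula.On, hOn₁, hOn₂]⟩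
  case not.not ih _ | all.all ih _ _ => exact ih h
  case op.op ih _ _ =>
    obtain ⟨ha, hOn⟩ := ih h.2
    exact ⟨⟨by simp only [hOn], ha⟩, by simp only [stratify, Formula.On, hOn]⟩

end Stratify

section IntendedStructure

variable (T : Set LOO)

lemma eval_MStruc_numeral (t : ℕ → ℕ) (n : ℕ) : (numeral n).eval (MStruc T) t = n := by
  induction n with
  | zero => rfl
  | succ n ih => exact congrArg Nat.succ ih

lemma eval_MStruc_numSub (τ : Term) (s t : ℕ → ℕ) (B : List ℕ) :
    (τ.numSub s B).eval (MStruc T) t = τ.eval (MStruc T) (fun x => if x ∈ B then t x else s x) := by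
  induction τ with
  | var x => by_cases hx : x ∈ B <;> simp [Term.numSub, Term.eval, hx, eval_MStruc_numeral] <;> rfl
  | _ => simp_all [Term.numSub, Term.eval]

lemma sat_MStruc_numSub (φ : LOO) (s t : ℕ → ℕ) (B : List ℕ) :
    Sat (MStruc T) (φ.numSub s B) t ↔ Sat (MStruc T) φ (fun x => if x ∈ B then t x else s x) := by
  induction φ generalizing B t with
  | eq t₁ t₂ => simp only [Formula.numSub, Sat, eval_MStruc_numSub]
  | imp φ ψ ihφ ihψ => simp only [Formula.numSub, Sat, ihφ, ihψ]
  | not φ ih => simp only [Formula.numSub, Sat, ih]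
  | all y φ ih =>
    refine forall_congr' fun a => (ih _ _).trans (Eq.to_iff (congrArg _ (funext fun w => ?_)))
    by_cases hwy : w = y <;> simp [Function.update, hwy]
  | op α φ =>
    change Models _ (assignSub t (φ.numSub s B)) ↔ Models _ (assignSub _ φ)
    unfold assignSub
    rw [Formula.numSub_numSub (by simp)]
    exact Iff.rfl

lemma sat_MStruc_assignSub (φ : LOO) (s t : ℕ → ℕ) :
    Sat (MStruc T) (assignSub s φ) t ↔ Sat (MStruc T) φ s :=
  sat_MStruc_numSub T φ s t []

end IntendedStructure

lemma sat_upStruc_stratify (M : PreStruc Ord2) (X : Set Ord2) (φ : LEA) (s : ℕ → M.U) :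
    Sat (upStruc M (stratify X)) φ s ↔ Sat M (stratify X φ) s := by
  have heval : ∀ (t : Term) (s : ℕ → M.U), t.eval (upStruc M (stratify X)) s = t.eval M s := by
    intro t s
    induction t <;> simp_all [Term.eval, upStruc]
  induction φ generalizing s with
  | eq t u => simp only [Sat, stratify, heval]; rfl
  | imp φ ψ ihφ ihψ => simp only [Sat, stratify, ihφ, ihψ]
  | not φ ih => simp only [Sat, stratify, ih]
  | all x φ ih => exact forall_congr' fun a => ih _
  | op K φ => rfl

lemma isStruc_upStruc_MStruc_stratify (T : Set LOO) (X : Set Ord2) :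
    IsStruc (upStruc (MStruc T) (stratify X)) := by
  refine ⟨fun _ φ (s t : ℕ → ℕ) hst => ?_, fun _ φ ψ (s : ℕ → ℕ) hφψ => ?_,
    fun _ φ x y (s : ℕ → ℕ) hsub => ?_⟩
  · change Models _ (assignSub s (stratify X φ)) ↔ Models _ (assignSub t (stratify X φ))
    unfold assignSub
    rw [Formula.numSub_congr fun x hx _ => hst x (by rwa [free_stratify] at hx)]
  · obtain ⟨hα, hOn⟩ := alpha_stratify (X := X) hφψ
    change Models _ (assignSub s (stratify X φ)) ↔ Models _ (assignSub s (stratify X ψ))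
    rw [hOn]
    exact models_iff_of_alphaVariant
      (Formula.alpha_numSub hα fun _ _ hxy => Or.inr ⟨List.not_mem_nil, List.not_mem_nil, hxy⟩)
  · change Models _ (assignSub s (stratify X (φ.subst x (.var y)))) ↔
      Models _ (assignSub _ (stratify X φ))
    unfold assignSub
    rw [stratify_subst, Formula.On_subst,
      Formula.numSub_subst_var (substitutable_stratify hsub) List.not_mem_nil List.not_mem_nil]
    rfl

/-- The Assigned Validity schema is upgeneric: for every `L_EA`-theory `T`
containing it, `𝓜_{T^⊕} ⊨ (Assigned Validity)^⊕`. -/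
theorem assignedValidity_upgeneric : Upgeneric AssignedValidity := by
  rintro T - - _ ⟨_, ⟨φ, s, hφ, rfl⟩, _, ⟨X, -, rfl⟩, rfl⟩ t
  rw [stratify_assignSub]
  refine (sat_MStruc_assignSub _ _ s t).2 ((sat_upStruc_stratify (MStruc (oplus T)) X φ s).1 ?_)
  exact hφ _ (isStruc_upStruc_MStruc_stratify _ X) s

end FCT
end
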